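/- arXiv:1809.00249 — 3 statements merged into one kernel-verified Lean document; each statement's English description precedes it below -/
import Mathlib

section
/- Under the setup of the UPRE function U_k, its second derivative satisfies U_k''(α) = −(1/α) U_k'(α) + (8/α²)(Σ_{i=1}^k s_i² φ_i² γ_i (2γ_i − φ_i) − σ² Σ_{i=1}^k φ_i γ_i (γ_i − φ_i)) for α > 0, where γ_i = γ_i(α) and φ_i = φ_i(α). -/
/-!
The filter factors satisfy `φᵢ' = (2/α) φᵢ γᵢ = -γᵢ'`. Hence
`(φᵢ² γᵢ)' = (2/α) φᵢ² γᵢ (2γᵢ - φᵢ)` and `(φᵢ γᵢ)' = (2/α) φᵢ γᵢ (γᵢ - φᵢ)`, and differentiating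
`U' = (4/α) S` by the product rule gives the `-(1/α) U'` term from the factor `4/α` and the
bracket from `S'`.
-/

theorem hasDerivAt_sq_div_sq_add_sq (c : ℝ) {x : ℝ} (hx : x ≠ 0) :
    HasDerivAt (fun t => t ^ 2 / (c ^ 2 + t ^ 2))
      (2 / x * (x ^ 2 / (c ^ 2 + x ^ 2)) * (c ^ 2 / (c ^ 2 + x ^ 2))) x := by
  have hd : c ^ 2 + x ^ 2 ≠ 0 := by positivity
  refine ((hasDerivAt_pow 2 x).div ((hasDerivAt_pow 2 x).const_add (c ^ 2)) hd).congr_deriv ?_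
  field_simp
  ring

theorem hasDerivAt_const_sq_div_sq_add_sq (c : ℝ) {x : ℝ} (hx : x ≠ 0) :
    HasDerivAt (fun t => c ^ 2 / (c ^ 2 + t ^ 2))
      (-(2 / x) * (x ^ 2 / (c ^ 2 + x ^ 2)) * (c ^ 2 / (c ^ 2 + x ^ 2))) x := by
  have hd : c ^ 2 + x ^ 2 ≠ 0 := by positivity
  refine ((hasDerivAt_const x (c ^ 2)).div ((hasDerivAt_pow 2 x).const_add (c ^ 2)) hd)
    |>.congr_deriv ?_
  field_simp
  ring

section FilterFactors

variable {φ γ : ℝ → ℝ} {α : ℝ}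

theorem HasDerivAt.const_mul_sq_mul_of_filterFactors (hφ : HasDerivAt φ (2 / α * φ α * γ α) α)
    (hγ : HasDerivAt γ (-(2 / α) * φ α * γ α) α) (c : ℝ) :
    HasDerivAt (fun x => c * φ x ^ 2 * γ x) (2 / α * (c * φ α ^ 2 * γ α * (2 * γ α - φ α))) α := by
  refine (((hφ.fun_pow 2).const_mul c).mul hγ).congr_deriv ?_
  push_cast
  ring

theorem HasDerivAt.mul_of_filterFactors (hφ : HasDerivAt φ (2 / α * φ α * γ α) α)
    (hγ : HasDerivAt γ (-(2 / α) * φ α * γ α) α) :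
    HasDerivAt (fun x => φ x * γ x) (2 / α * (φ α * γ α * (γ α - φ α))) α := by
  refine (hφ.mul hγ).congr_deriv ?_
  ring

end FilterFactors

theorem HasDerivAt.const_div_mul {S : ℝ → ℝ} {S' α : ℝ} (hS : HasDerivAt S S' α) (hα : α ≠ 0)
    (c : ℝ) :
    HasDerivAt (fun x => c / x * S x) (-(1 / α) * (c / α * S α) + c / α * S') α := by
  refine (((hasDerivAt_inv hα).const_mul c).mul hS).congr_deriv ?_
  field_simp

theorem upre_second_derivative_general (k : ℕ) (σs s : ℕ → ℝ) (σ : ℝ)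
    (γ φ : ℕ → ℝ → ℝ)
    (hγ : ∀ i α, γ i α = (σs i)^2 / ((σs i)^2 + α^2))
    (hφ : ∀ i α, φ i α = α^2 / ((σs i)^2 + α^2))
    (U' : ℝ → ℝ)
    (hU' : ∀ α, U' α = (4/α) * (∑ i ∈ Finset.Icc 1 k, (s i)^2 * (φ i α)^2 * γ i α
                                 - σ^2 * ∑ i ∈ Finset.Icc 1 k, φ i α * γ i α)) :
    ∀ α : ℝ, 0 < α →
      HasDerivAt U'
        (-(1/α) * U' α
          + (8/α^2) * (∑ i ∈ Finset.Icc 1 k,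
                (s i)^2 * (φ i α)^2 * γ i α * (2 * γ i α - φ i α)
              - σ^2 * ∑ i ∈ Finset.Icc 1 k,
                φ i α * γ i α * (γ i α - φ i α))) α := by
  intro α hα
  have hα0 : α ≠ 0 := hα.ne'
  have hφ' : ∀ i, HasDerivAt (φ i) (2 / α * φ i α * γ i α) α := fun i => by
    rw [hφ i α, hγ i α, funext (hφ i)]
    exact hasDerivAt_sq_div_sq_add_sq (σs i) hα0
  have hγ' : ∀ i, HasDerivAt (γ i) (-(2 / α) * φ i α * γ i α) α := fun i => by
    rw [hφ i α, hγ i α, funext (hγ i)]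
    exact hasDerivAt_const_sq_div_sq_add_sq (σs i) hα0
  have hS := (HasDerivAt.fun_sum (u := Finset.Icc 1 k) fun i _ =>
      (hφ' i).const_mul_sq_mul_of_filterFactors (hγ' i) (s i ^ 2)).fun_sub
    ((HasDerivAt.fun_sum (u := Finset.Icc 1 k) fun i _ =>
      (hφ' i).mul_of_filterFactors (hγ' i)).const_mul (σ ^ 2))
  rw [hU' α, funext hU']
  refine (hS.const_div_mul hα0 4).congr_deriv ?_
  simp only [← Finset.mul_sum]
  ring

theorem upre_second_derivative (k : ℕ) (σs s : ℕ → ℝ) (σ : ℝ) (hσ : 0 < σ)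
    (hpos : ∀ i ∈ Finset.Icc 1 k, 0 < σs i)
    (γ φ : ℕ → ℝ → ℝ)
    (hγ : ∀ i α, γ i α = (σs i)^2 / ((σs i)^2 + α^2))
    (hφ : ∀ i α, φ i α = α^2 / ((σs i)^2 + α^2))
    (U' : ℝ → ℝ)
    (hU' : ∀ α, U' α = (4/α) * (∑ i ∈ Finset.Icc 1 k, (s i)^2 * (φ i α)^2 * γ i α
                                 - σ^2 * ∑ i ∈ Finset.Icc 1 k, φ i α * γ i α)) :
    ∀ α : ℝ, 0 < α →
      HasDerivAt U'
        (-(1/α) * U' α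
          + (8/α^2) * (∑ i ∈ Finset.Icc 1 k,
                (s i)^2 * (φ i α)^2 * γ i α * (2 * γ i α - φ i α)
              - σ^2 * ∑ i ∈ Finset.Icc 1 k,
                φ i α * γ i α * (γ i α - φ i α))) α :=
  upre_second_derivative_general k σs s σ γ φ hγ hφ U' hU'
end

section
/- Let U_k be the UPRE function with singular values σ_1 ≥ ... ≥ σ_k > 0. If 0 < ᾱ < σ_k/√2 is a stationary point of U_k (U_k'(ᾱ) = 0), then U_k''(ᾱ) > 0; hence every stationary point of U_k in the open interval (0, σ_k/√2) is a local minimum, and there is at most one stationary point in this interval. -/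
/-!
Writing `c = σ_i²`, each summand of `U_k` has derivative `x · g(x)` with
`g(x) = 4 (c x² s_i² / (c + x²)³ - σ² c / (c + x²)²)`, and
`g'(x) = 8 c s_i² x (c - 2x²) / (c + x²)⁴ + 16 σ² c x / (c + x²)³`.
Below `σ_k / √2` every `c - 2x²` is nonnegative, so `G' > 0` for the factor `G = Σ g` of
`U_k' = x · G`, and `G` is strictly increasing there. Hence `G` vanishes at most once, and at
a zero `ᾱ` of `U_k'` we get `U_k''(ᾱ) = G(ᾱ) + ᾱ G'(ᾱ) = ᾱ G'(ᾱ) > 0`.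
-/

open Set

section DerivFactor

variable {f g g' : ℝ → ℝ} {b : ℝ}

theorem eq_zero_of_deriv_eq_zero_of_hasDerivAt_id_mul (hf : ∀ x, HasDerivAt f (x * g x) x)
    {a : ℝ} (ha : a ≠ 0) (hcrit : deriv f a = 0) : g a = 0 := by
  rw [(hf a).deriv] at hcrit
  exact (mul_eq_zero.mp hcrit).resolve_left ha

theorem deriv_deriv_pos_of_hasDerivAt_id_mul (hf : ∀ x, HasDerivAt f (x * g x) x)
    {a d : ℝ} (hg : HasDerivAt g d a) (ha : 0 < a) (hd : 0 < d)
    (hcrit : deriv f a = 0) : 0 < deriv (deriv f) a := by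
  have hderiv : deriv f = fun x => x * g x := funext fun x => (hf x).deriv
  have hsecond : HasDerivAt (fun x => x * g x) (1 * g a + a * d) a :=
    (hasDerivAt_id' a).mul hg
  rw [hderiv, hsecond.deriv, eq_zero_of_deriv_eq_zero_of_hasDerivAt_id_mul hf ha.ne' hcrit]
  simpa using mul_pos ha hd

theorem subsingleton_deriv_eq_zero_of_hasDerivAt_id_mul (hf : ∀ x, HasDerivAt f (x * g x) x)
    (hg : ∀ x, HasDerivAt g (g' x) x) (hg' : ∀ x ∈ Ioo 0 b, 0 < g' x) :
    {x ∈ Ioo 0 b | deriv f x = 0}.Subsingleton := by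
  have hmono : StrictMonoOn g (Ioo 0 b) :=
    strictMonoOn_of_hasDerivWithinAt_pos (convex_Ioo 0 b)
      (fun x _ => (hg x).continuousAt.continuousWithinAt)
      (fun x _ => (hg x).hasDerivWithinAt) (by simpa only [interior_Ioo] using hg')
  have hzero : ∀ x ∈ {x ∈ Ioo 0 b | deriv f x = 0}, g x = 0 := fun x hx =>
    eq_zero_of_deriv_eq_zero_of_hasDerivAt_id_mul hf hx.1.1.ne' hx.2
  intro x hx y hy
  exact hmono.injOn hx.1 hy.1 ((hzero x hx).trans (hzero y hy).symm)

end DerivFactor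

noncomputable section UpreTerm

variable (c t σ x : ℝ)

/-- With `c = σ_i²` and `t = s_i²` this is `φ_i(x)² s_i² + 2σ² γ_i(x)`. -/
def upreTerm : ℝ := (x ^ 2 / (c + x ^ 2)) ^ 2 * t + 2 * σ ^ 2 * (c / (c + x ^ 2))

def upreTermSlope : ℝ := 4 * (c * x ^ 2 * t / (c + x ^ 2) ^ 3 - σ ^ 2 * c / (c + x ^ 2) ^ 2)

def upreTermSlopeDeriv : ℝ :=
  8 * c * t * x * (c - 2 * x ^ 2) / (c + x ^ 2) ^ 4 + 16 * σ ^ 2 * c * x / (c + x ^ 2) ^ 3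

variable {c}

theorem hasDerivAt_upreTerm (hc : 0 < c) :
    HasDerivAt (upreTerm c t σ) (x * upreTermSlope c t σ x) x := by
  have hne : c + x ^ 2 ≠ 0 := by positivity
  have hsq : HasDerivAt (fun y : ℝ => y ^ 2) (2 * x) x := by simpa using hasDerivAt_pow 2 x
  have hden := hsq.const_add c
  refine (((hsq.div hden hne).pow 2 |>.mul_const t).add
    (((hasDerivAt_const x c).div hden hne).const_mul (2 * σ ^ 2))).congr_deriv ?_
  simp only [upreTermSlope, Pi.div_apply, Nat.cast_ofNat, Nat.add_one_sub_one, pow_one]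
  field_simp
  ring

theorem hasDerivAt_upreTermSlope (hc : 0 < c) :
    HasDerivAt (upreTermSlope c t σ) (upreTermSlopeDeriv c t σ x) x := by
  have hne : c + x ^ 2 ≠ 0 := by positivity
  have hsq : HasDerivAt (fun y : ℝ => y ^ 2) (2 * x) x := by simpa using hasDerivAt_pow 2 x
  have hden := hsq.const_add c
  refine ((((hsq.const_mul c).mul_const t).div (hden.pow 3) (pow_ne_zero 3 hne)).sub
    ((hasDerivAt_const x (σ ^ 2 * c)).div (hden.pow 2) (pow_ne_zero 2 hne)) |>.const_mul 4
    ).congr_deriv ?_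
  simp only [upreTermSlopeDeriv, Pi.pow_apply]
  field_simp
  ring

theorem upreTermSlopeDeriv_pos {t σ x : ℝ} (ht : 0 ≤ t) (hσ : σ ≠ 0) (hx : 0 < x)
    (hxc : 2 * x ^ 2 ≤ c) : 0 < upreTermSlopeDeriv c t σ x := by
  have hc : 0 < c := lt_of_lt_of_le (by positivity) hxc
  have hfirst : 0 ≤ 8 * c * t * x * (c - 2 * x ^ 2) / (c + x ^ 2) ^ 4 := by
    have : 0 ≤ c - 2 * x ^ 2 := sub_nonneg.mpr hxc
    positivity
  exact add_pos_of_nonneg_of_pos hfirst (by positivity)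

end UpreTerm

section UpreSum

variable {ι : Type*} {I : Finset ι} {c t : ι → ℝ} (σ x : ℝ)

theorem hasDerivAt_sum_upreTerm (hc : ∀ i ∈ I, 0 < c i) :
    HasDerivAt (fun y => ∑ i ∈ I, upreTerm (c i) (t i) σ y)
      (x * ∑ i ∈ I, upreTermSlope (c i) (t i) σ x) x := by
  rw [Finset.mul_sum]
  exact HasDerivAt.fun_sum fun i hi => hasDerivAt_upreTerm (t i) σ x (hc i hi)

theorem hasDerivAt_sum_upreTermSlope (hc : ∀ i ∈ I, 0 < c i) :
    HasDerivAt (fun y => ∑ i ∈ I, upreTermSlope (c i) (t i) σ y)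
      (∑ i ∈ I, upreTermSlopeDeriv (c i) (t i) σ x) x :=
  HasDerivAt.fun_sum fun i hi => hasDerivAt_upreTermSlope (t i) σ x (hc i hi)

theorem sum_upreTermSlopeDeriv_pos {σ x : ℝ} (hI : I.Nonempty) (ht : ∀ i ∈ I, 0 ≤ t i)
    (hσ : σ ≠ 0) (hx : 0 < x) (hxc : ∀ i ∈ I, 2 * x ^ 2 ≤ c i) :
    0 < ∑ i ∈ I, upreTermSlopeDeriv (c i) (t i) σ x :=
  Finset.sum_pos (fun i hi => upreTermSlopeDeriv_pos (ht i hi) hσ hx (hxc i hi)) hI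

end UpreSum

theorem two_mul_sq_lt_sq_of_lt_div_sqrt_two {x y : ℝ} (hx : 0 ≤ x) (h : x < y / √2) :
    2 * x ^ 2 < y ^ 2 := by
  have hlt : x * √2 < y := (lt_div_iff₀ (by positivity)).mp h
  calc 2 * x ^ 2 = (x * √2) ^ 2 := by rw [mul_pow, Real.sq_sqrt zero_le_two]; ring
    _ < y ^ 2 := pow_lt_pow_left₀ hlt (by positivity) two_ne_zero

theorem upre_unique_min_general (k : ℕ) (hk : 0 < k) (σs s : ℕ → ℝ) (σ : ℝ) (hσ : 0 < σ)
    (hpos : ∀ i ∈ Finset.Icc 1 k, 0 < σs i)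
    (hord : ∀ i ∈ Finset.Icc 1 k, ∀ j ∈ Finset.Icc 1 k, i ≤ j → σs j ≤ σs i)
    (U : ℝ → ℝ)
    (hU : ∀ α, U α = ∑ i ∈ Finset.Icc 1 k, (α^2 / ((σs i)^2 + α^2))^2 * (s i)^2
                      + 2 * σ^2 * ∑ i ∈ Finset.Icc 1 k, (σs i)^2 / ((σs i)^2 + α^2)) :
    (∀ ᾱ : ℝ, 0 < ᾱ → ᾱ < σs k / Real.sqrt 2 → deriv U ᾱ = 0 →
        deriv (deriv U) ᾱ > 0 ∧ IsLocalMin U ᾱ) ∧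
    (∀ α₁ ∈ Set.Ioo 0 (σs k / Real.sqrt 2), ∀ α₂ ∈ Set.Ioo 0 (σs k / Real.sqrt 2),
        deriv U α₁ = 0 → deriv U α₂ = 0 → α₁ = α₂) := by
  have hk' : k ∈ Finset.Icc 1 k := Finset.mem_Icc.mpr ⟨hk, le_rfl⟩
  have hc : ∀ i ∈ Finset.Icc 1 k, 0 < σs i ^ 2 := fun i hi => pow_pos (hpos i hi) 2
  have hUsum : U = fun α => ∑ i ∈ Finset.Icc 1 k, upreTerm (σs i ^ 2) (s i ^ 2) σ α := by
    funext α
    rw [hU, Finset.mul_sum, ← Finset.sum_add_distrib]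
    rfl
  have hU' := fun x => hasDerivAt_sum_upreTerm (t := fun i => s i ^ 2) σ x hc
  rw [← hUsum] at hU'
  have hG := fun x => hasDerivAt_sum_upreTermSlope (t := fun i => s i ^ 2) σ x hc
  have hG' : ∀ x ∈ Ioo 0 (σs k / √2),
      0 < ∑ i ∈ Finset.Icc 1 k, upreTermSlopeDeriv (σs i ^ 2) (s i ^ 2) σ x := fun x hx =>
    sum_upreTermSlopeDeriv_pos ⟨k, hk'⟩ (fun i _ => sq_nonneg (s i)) hσ.ne' hx.1 fun i hi =>
      (two_mul_sq_lt_sq_of_lt_div_sqrt_two hx.1.le hx.2).le.trans <|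
        pow_le_pow_left₀ (hpos k hk').le (hord i hi k hk' (Finset.mem_Icc.mp hi).2) 2
  have hsecond : ∀ a ∈ Ioo 0 (σs k / √2), deriv U a = 0 → 0 < deriv (deriv U) a :=
    fun a ha => deriv_deriv_pos_of_hasDerivAt_id_mul hU' (hG a) ha.1 (hG' a ha)
  have hunique := subsingleton_deriv_eq_zero_of_hasDerivAt_id_mul hU' hG hG'
  refine ⟨fun a ha₀ hab hcrit => ?_, fun a₁ h₁ a₂ h₂ hd₁ hd₂ => hunique ⟨h₁, hd₁⟩ ⟨h₂, hd₂⟩⟩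
  have hpos₂ := hsecond a ⟨ha₀, hab⟩ hcrit
  exact ⟨hpos₂, isLocalMin_of_deriv_deriv_pos hpos₂ hcrit (hU' a).continuousAt⟩

theorem upre_unique_min (k : ℕ) (hk : 0 < k) (σs s : ℕ → ℝ) (σ : ℝ) (hσ : 0 < σ)
    (hpos : ∀ i ∈ Finset.Icc 1 k, 0 < σs i)
    (hord : ∀ i ∈ Finset.Icc 1 k, ∀ j ∈ Finset.Icc 1 k, i ≤ j → σs j ≤ σs i)
    (hs : ∃ i ∈ Finset.Icc 1 k, s i ≠ 0)
    (U : ℝ → ℝ)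
    (hU : ∀ α, U α = ∑ i ∈ Finset.Icc 1 k, (α^2 / ((σs i)^2 + α^2))^2 * (s i)^2
                      + 2 * σ^2 * ∑ i ∈ Finset.Icc 1 k, (σs i)^2 / ((σs i)^2 + α^2)) :
    (∀ ᾱ : ℝ, 0 < ᾱ → ᾱ < σs k / Real.sqrt 2 → deriv U ᾱ = 0 →
        deriv (deriv U) ᾱ > 0 ∧ IsLocalMin U ᾱ) ∧
    (∀ α₁ ∈ Set.Ioo 0 (σs k / Real.sqrt 2), ∀ α₂ ∈ Set.Ioo 0 (σs k / Real.sqrt 2),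
        deriv U α₁ = 0 → deriv U α₂ = 0 → α₁ = α₂) :=
  upre_unique_min_general k hk σs s σ hσ hpos hord U hU
end

section
/- Let σ_i > 0 with s_i² = σ² for ℓ < i ≤ k, and suppose α > σ_{ℓ+1}/√5. Then U_k''(α) = U_ℓ''(α) + (4σ²/α²) Σ_{i=ℓ+1}^k φ_i γ_i(−6φ_i² + 7φ_i − 1) > U_ℓ''(α), since each summand is positive. -/
/-!
Each index contributes a rational function of `α`, so `U_k'' - U_ℓ''` is the sum of the second
derivatives of the summands with `ℓ < i ≤ k`. For those `s_i² = σ²`, and then the second derivative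
of `φ_i² σ² + 2σ² γ_i` collapses to `4σ²σ_i⁴(5α² - σ_i²)/(σ_i² + α²)⁴`, which is positive as soon as
`σ_i² < 5α²`; by the ordering of the `σ_i` this holds for all `i > ℓ` once `α > σ_{ℓ+1}/√5`.
-/

open Finset

section Calculus

variable {𝕜 : Type*} [NontriviallyNormedField 𝕜] {ι : Type*}

theorem deriv_deriv_finset_sum (S : Finset ι) (f f' f'' : ι → 𝕜 → 𝕜) (x : 𝕜)
    (hf : ∀ i ∈ S, ∀ y, HasDerivAt (f i) (f' i y) y)
    (hf' : ∀ i ∈ S, HasDerivAt (f' i) (f'' i x) x) :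
    deriv (deriv fun y ↦ ∑ i ∈ S, f i y) x = ∑ i ∈ S, f'' i x := by
  have hderiv : deriv (fun y ↦ ∑ i ∈ S, f i y) = fun y ↦ ∑ i ∈ S, f' i y :=
    funext fun y ↦ (HasDerivAt.fun_sum fun i hi ↦ hf i hi y).deriv
  rw [hderiv]
  exact (HasDerivAt.fun_sum hf').deriv

end Calculus

/-- The summand `φ² t + 2 v γ` of the UPRE, with `c = σ_i²`, `t = s_i²`, `v = σ²`. -/
noncomputable def upreSummand (c t v α : ℝ) : ℝ :=
  (α ^ 2 / (c + α ^ 2)) ^ 2 * t + 2 * v * (c / (c + α ^ 2))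

noncomputable def upreSummand' (c t v α : ℝ) : ℝ :=
  4 * c * α ^ 3 * t / (c + α ^ 2) ^ 3 - 4 * v * c * α / (c + α ^ 2) ^ 2

noncomputable def upreSummand'' (c t v α : ℝ) : ℝ :=
  12 * c * t * α ^ 2 * (c - α ^ 2) / (c + α ^ 2) ^ 4 - 4 * v * c * (c - 3 * α ^ 2) / (c + α ^ 2) ^ 3

section Summand

variable {c : ℝ} (t v x : ℝ)

theorem hasDerivAt_upreSummand (hc : 0 < c) :
    HasDerivAt (upreSummand c t v) (upreSummand' c t v x) x := by
  have hden : c + x ^ 2 ≠ 0 := by positivity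
  have hsq : HasDerivAt (fun α : ℝ ↦ α ^ 2) (2 * x) x := by simpa using hasDerivAt_pow 2 x
  have hsum := hsq.const_add c
  have hφ := hsq.div hsum hden
  have hγ := (hasDerivAt_const x c).div hsum hden
  refine ((hφ.pow 2).mul_const t |>.add (hγ.const_mul (2 * v))).congr_deriv ?_
  norm_num only [upreSummand', Pi.div_apply]
  field_simp
  ring

theorem hasDerivAt_upreSummand' (hc : 0 < c) :
    HasDerivAt (upreSummand' c t v) (upreSummand'' c t v x) x := by
  have hden : c + x ^ 2 ≠ 0 := by positivity
  have hsq : HasDerivAt (fun α : ℝ ↦ α ^ 2) (2 * x) x := by simpa using hasDerivAt_pow 2 x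
  have hcube : HasDerivAt (fun α : ℝ ↦ α ^ 3) (3 * x ^ 2) x := by simpa using hasDerivAt_pow 3 x
  have hsum := hsq.const_add c
  have hfirst := ((hcube.const_mul (4 * c)).mul_const t).div (hsum.pow 3) (pow_ne_zero 3 hden)
  have hsecond := ((hasDerivAt_id x).const_mul (4 * v * c)).div (hsum.pow 2) (pow_ne_zero 2 hden)
  refine (hfirst.sub hsecond).congr_deriv ?_
  simp only [upreSummand'', Pi.pow_apply, id]
  field_simp
  ring

variable {x}

theorem upreSummand''_self (hden : c + x ^ 2 ≠ 0) :
    upreSummand'' c v v x = 4 * v * c ^ 2 * (5 * x ^ 2 - c) / (c + x ^ 2) ^ 4 := by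
  simp only [upreSummand'']
  field_simp
  ring

theorem upreSummand''_self_eq (hc : 0 ≤ c) (hx : x ≠ 0) :
    upreSummand'' c v v x = 4 * v / x ^ 2 * (x ^ 2 / (c + x ^ 2) * (c / (c + x ^ 2)) *
      (-6 * (x ^ 2 / (c + x ^ 2)) ^ 2 + 7 * (x ^ 2 / (c + x ^ 2)) - 1)) := by
  have hden : c + x ^ 2 ≠ 0 := by positivity
  rw [upreSummand''_self v hden]
  field_simp
  ring

theorem upreSummand''_self_pos {v} (hv : 0 < v) (hc : 0 < c) (hcx : c < 5 * x ^ 2) :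
    0 < upreSummand'' c v v x := by
  rw [upreSummand''_self v (by positivity)]
  have : 0 < 5 * x ^ 2 - c := by linarith
  positivity

end Summand

theorem deriv_deriv_sum_upreSummand (S : Finset ℕ) (c t : ℕ → ℝ) (v x : ℝ)
    (hc : ∀ i ∈ S, 0 < c i) :
    deriv (deriv fun y ↦ ∑ i ∈ S, upreSummand (c i) (t i) v y) x =
      ∑ i ∈ S, upreSummand'' (c i) (t i) v x :=
  deriv_deriv_finset_sum S _ _ _ x (fun i hi y ↦ hasDerivAt_upreSummand _ _ y (hc i hi))
    fun i hi ↦ hasDerivAt_upreSummand' _ _ x (hc i hi)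

theorem sq_lt_mul_sq_of_div_sqrt_lt {a b x : ℝ} (ha : 0 ≤ a) (hb : 0 < b) (h : a / √b < x) :
    a ^ 2 < b * x ^ 2 := by
  have hlt : a < √b * x := by rwa [div_lt_iff₀' (Real.sqrt_pos.2 hb)] at h
  calc a ^ 2 < (√b * x) ^ 2 := pow_lt_pow_left₀ hlt ha two_ne_zero
    _ = b * x ^ 2 := by rw [mul_pow, Real.sq_sqrt hb.le]

theorem upreSummand''_sq_self_pos {a b v x : ℝ} (hv : 0 < v) (ha : 0 < a) (hab : a ≤ b)
    (hbx : b / √5 < x) : 0 < upreSummand'' (a ^ 2) v v x :=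
  upreSummand''_self_pos hv (by positivity) <| sq_lt_mul_sq_of_div_sqrt_lt ha.le (by norm_num)
    ((div_le_div_of_nonneg_right hab (Real.sqrt_nonneg 5)).trans_lt hbx)

theorem sum_Icc_one_add_sum_Icc {M : Type*} [AddCommMonoid M] (f : ℕ → M) {l k : ℕ}
    (hlk : l ≤ k) : ∑ i ∈ Icc 1 l, f i + ∑ i ∈ Icc (l + 1) k, f i = ∑ i ∈ Icc 1 k, f i := by
  simp only [Icc_add_one_left_eq_Ioc]
  exact sum_Ioc_consecutive f (Nat.zero_le l) hlk

theorem upre_second_derivative_nesting (ℓ k : ℕ) (hℓk : ℓ < k)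
    (σs s : ℕ → ℝ) (σ : ℝ) (hσ : 0 < σ)
    (hpos : ∀ i ∈ Finset.Icc 1 k, 0 < σs i)
    (hord : ∀ i ∈ Finset.Icc 1 k, ∀ j ∈ Finset.Icc 1 k, i ≤ j → σs j ≤ σs i)
    (hnoise : ∀ i, ℓ < i → i ≤ k → (s i)^2 = σ^2)
    (γ φ : ℕ → ℝ → ℝ)
    (hγ : ∀ i α, γ i α = (σs i)^2 / ((σs i)^2 + α^2))
    (hφ : ∀ i α, φ i α = α^2 / ((σs i)^2 + α^2))
    (U : ℕ → ℝ → ℝ)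
    (hU : ∀ m α, U m α = ∑ i ∈ Finset.Icc 1 m, (φ i α)^2 * (s i)^2
                      + 2 * σ^2 * ∑ i ∈ Finset.Icc 1 m, γ i α) :
    ∀ α : ℝ, σs (ℓ+1) / Real.sqrt 5 < α →
      deriv (deriv (U k)) α = deriv (deriv (U ℓ)) α
          + (4*σ^2/α^2) * ∑ i ∈ Finset.Icc (ℓ+1) k,
              φ i α * γ i α * (-6*(φ i α)^2 + 7*(φ i α) - 1) ∧
      deriv (deriv (U k)) α > deriv (deriv (U ℓ)) α := by
  intro α hα
  have hfirst : ℓ + 1 ∈ Icc 1 k := mem_Icc.2 ⟨le_add_self, hℓk⟩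
  have hmem : ∀ i ∈ Icc (ℓ + 1) k, i ∈ Icc 1 k ∧ ℓ < i ∧ i ≤ k := fun i hi ↦ by
    simp only [mem_Icc] at hi ⊢; omega
  have hα0 : 0 < α := (div_pos (hpos _ hfirst) (by positivity)).trans hα
  have hU'' : ∀ m ≤ k, deriv (deriv (U m)) α =
      ∑ i ∈ Icc 1 m, upreSummand'' (σs i ^ 2) (s i ^ 2) (σ ^ 2) α := fun m hm ↦ by
    have hUm : U m = fun y ↦ ∑ i ∈ Icc 1 m, upreSummand (σs i ^ 2) (s i ^ 2) (σ ^ 2) y := by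
      ext y
      simp only [hU, hγ, hφ, upreSummand, mul_sum, ← sum_add_distrib]
    rw [hUm, deriv_deriv_sum_upreSummand]
    exact fun i hi ↦ pow_pos (hpos i (Icc_subset_Icc_right hm hi)) 2
  have hsplit := sum_Icc_one_add_sum_Icc
    (fun i ↦ upreSummand'' (σs i ^ 2) (s i ^ 2) (σ ^ 2) α) hℓk.le
  have hnoise' : ∀ i ∈ Icc (ℓ + 1) k, s i ^ 2 = σ ^ 2 := fun i hi ↦
    hnoise i (hmem i hi).2.1 (hmem i hi).2.2
  have hpos_tail : 0 < ∑ i ∈ Icc (ℓ + 1) k, upreSummand'' (σs i ^ 2) (s i ^ 2) (σ ^ 2) α := by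
    refine sum_pos (fun i hi ↦ ?_) ⟨ℓ + 1, mem_Icc.2 ⟨le_rfl, hℓk⟩⟩
    rw [hnoise' i hi]
    exact upreSummand''_sq_self_pos (by positivity) (hpos i (hmem i hi).1)
      (hord _ hfirst i (hmem i hi).1 (mem_Icc.1 hi).1) hα
  rw [hU'' k le_rfl, hU'' ℓ hℓk.le, ← hsplit]
  refine ⟨?_, by linarith⟩
  rw [mul_sum]
  refine congrArg _ (sum_congr rfl fun i hi ↦ ?_)
  rw [hnoise' i hi, upreSummand''_self_eq _ (sq_nonneg _) hα0.ne', hφ, hγ]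
end
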